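/- Let A be strictly positive, let T be a bounded linear operator on H with A-adjoint S = T^{#_A} (i.e. A∘S = T*∘A and range(S) ⊆ closure(range A)), and let R = S^{#_A} be the A-adjoint of S. Then ‖T‖_A/2 + (‖(S+R)/2‖_A - ‖(S-R)/(2i)‖_A)/2 ≤ w_A(T); that is, ‖T‖_A/2 + (‖Re_A(T^{#_A})‖_A - ‖Im_A(T^{#_A})‖_A)/2 ≤ w_A(T). -/

import Mathlib

/-!
Since `A ∘ R = S* ∘ A = A ∘ T`, every quantity involved sees `T` only through `A ∘ T`, so `T`
may be replaced by `R`. Then `S` and `R` are each other's `A`-adjoints, `P = (S + R) / 2` is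
`A`-selfadjoint with `⟨APx, x⟩ = Re ⟨ARx, x⟩`, and `R = P - iQ` for `Q = (S - R) / (2i)`.
Polarization gives `‖P‖_A ≤ w_A(R)`, the triangle inequality gives `‖R‖_A ≤ ‖P‖_A + ‖Q‖_A`, and
adding the two yields the claim.

The suprema are finite because an operator `T` with an `A`-adjoint `S` is `A`-bounded:
`‖Tx‖_A² = ⟨Ax, STx⟩`, and the `A`-selfadjoint `G = ST` satisfies `‖Gx‖_A ≤ ‖G‖ ‖x‖_A` by the
doubling estimate `‖Gx‖_A ^ 2 ^ k ≤ ‖G ^ 2 ^ k x‖_A ≤ √‖A‖ ‖G‖ ^ 2 ^ k ‖x‖` for `‖x‖_A = 1`.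
-/

open scoped InnerProductSpace
open ContinuousLinearMap

variable {H : Type*} [NormedAddCommGroup H] [InnerProductSpace ℂ H] [CompleteSpace H]

/-- The `A`-seminorm `‖x‖_A = √⟨Ax,x⟩`. -/
noncomputable def aNorm (A : H →L[ℂ] H) (x : H) : ℝ :=
  Real.sqrt (⟪A x, x⟫_ℂ).re

/-- The `A`-numerical radius `w_A(T) = sup {|⟨ATx,x⟩| : x ∈ H, ‖x‖_A = 1}`. -/
noncomputable def wA (A T : H →L[ℂ] H) : ℝ :=
  sSup {r : ℝ | ∃ x : H, aNorm A x = 1 ∧ r = ‖⟪A (T x), x⟫_ℂ‖}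

/-- The `A`-operator seminorm `‖T‖_A = sup {‖Tx‖_A : x ∈ closure (range A), ‖x‖_A = 1}`. -/
noncomputable def aOpNorm (A T : H →L[ℂ] H) : ℝ :=
  sSup {r : ℝ | ∃ x : H, x ∈ closure (Set.range (⇑A)) ∧ aNorm A x = 1 ∧ r = aNorm A (T x)}

/-- The `B`-numerical radius of the operator matrix `[[T1,T2],[T3,T4]]` acting on `H ⊕ H` by
`(x, y) ↦ (T1 x + T2 y, T3 x + T4 y)`, where `B = [[A,0],[0,A]]`:
`w_B(T) = sup {|⟨BTz,z⟩| : z ∈ H ⊕ H, ‖z‖_B = 1}`. -/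
noncomputable def wB (A T1 T2 T3 T4 : H →L[ℂ] H) : ℝ :=
  sSup {r : ℝ | ∃ x y : H, Real.sqrt ((⟪A x, x⟫_ℂ).re + (⟪A y, y⟫_ℂ).re) = 1 ∧
    r = ‖⟪A (T1 x + T2 y), x⟫_ℂ + ⟪A (T3 x + T4 y), y⟫_ℂ‖}

lemma le_of_forall_pow_two_pow_le {a b D : ℝ} (hb : 0 ≤ b)
    (h : ∀ k : ℕ, a ^ 2 ^ k ≤ D * b ^ 2 ^ k) : a ≤ b := by
  by_contra! hab
  have ha : 0 < a := hb.trans_lt hab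
  have hD : 0 < D := by
    have := h 0
    simp only [pow_zero, pow_one] at this
    exact pos_of_mul_pos_left (ha.trans_le this) hb
  obtain ⟨n, hn⟩ := exists_pow_lt_of_lt_one (inv_pos.2 hD) ((div_lt_one ha).2 hab)
  have hq : (b / a) ^ 2 ^ n ≤ (b / a) ^ n :=
    pow_le_pow_of_le_one (div_nonneg hb ha.le) ((div_le_one ha).2 hab.le) Nat.lt_two_pow_self.le
  have h1 : 1 ≤ D * (b / a) ^ 2 ^ n := by
    rw [div_pow, mul_div_assoc', le_div_iff₀ (pow_pos ha _), one_mul]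
    exact h n
  have h2 : D * (b / a) ^ 2 ^ n < 1 :=
    calc D * (b / a) ^ 2 ^ n ≤ D * (b / a) ^ n := by gcongr
      _ < D * D⁻¹ := by gcongr
      _ = 1 := mul_inv_cancel₀ hD.ne'
  linarith

section

variable {E : Type*} [NormedAddCommGroup E] [InnerProductSpace ℂ E] {A : E →L[ℂ] E}

-- Equivalently `A ∘L G = adjoint G ∘L A`.
def IsASelfAdjoint (A G : E →L[ℂ] E) : Prop := ∀ x y, ⟪A (G x), y⟫_ℂ = ⟪A x, G y⟫_ℂ

def ABounded (A T : E →L[ℂ] E) : Prop := ∃ K, ∀ x, aNorm A (T x) ≤ K * aNorm A x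

lemma aNorm_nonneg (x : E) : 0 ≤ aNorm A x := Real.sqrt_nonneg _

lemma sq_aNorm (hA : A.IsPositive) (x : E) : aNorm A x ^ 2 = (⟪A x, x⟫_ℂ).re :=
  Real.sq_sqrt (hA.re_inner_nonneg_left x)

lemma aNorm_le_sqrt_opNorm_mul_norm (x : E) : aNorm A x ≤ √‖A‖ * ‖x‖ := by
  rw [← Real.sqrt_sq (norm_nonneg x), ← Real.sqrt_mul (norm_nonneg A)]
  refine Real.sqrt_le_sqrt ((Complex.re_le_norm _).trans ?_)
  calc ‖⟪A x, x⟫_ℂ‖ ≤ ‖A x‖ * ‖x‖ := norm_inner_le_norm _ _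
    _ ≤ ‖A‖ * ‖x‖ * ‖x‖ := by gcongr; exact A.le_opNorm x
    _ = ‖A‖ * ‖x‖ ^ 2 := by ring

lemma aNorm_congr (hA : A.IsPositive) {x y : E} (h : A x = A y) : aNorm A x = aNorm A y := by
  rw [aNorm, aNorm, h, hA.inner_left_eq_inner_right y x, h, ← hA.inner_left_eq_inner_right]

lemma aOpNorm_nonneg (T : E →L[ℂ] E) : 0 ≤ aOpNorm A T :=
  Real.sSup_nonneg <| by rintro _ ⟨x, -, -, rfl⟩; exact aNorm_nonneg _

lemma aOpNorm_le {T : E →L[ℂ] E} {c : ℝ} (hc : 0 ≤ c)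
    (h : ∀ x ∈ closure (Set.range A), aNorm A x = 1 → aNorm A (T x) ≤ c) : aOpNorm A T ≤ c :=
  Real.sSup_le (by rintro _ ⟨x, hx, hx1, rfl⟩; exact h x hx hx1) hc

lemma ABounded.aNorm_apply_le_aOpNorm {T : E →L[ℂ] E} (hT : ABounded A T) {x : E}
    (hx : x ∈ closure (Set.range A)) (hx1 : aNorm A x = 1) : aNorm A (T x) ≤ aOpNorm A T := by
  obtain ⟨K, hK⟩ := hT
  refine le_csSup ⟨K, ?_⟩ ⟨x, hx, hx1, rfl⟩
  rintro _ ⟨y, -, hy, rfl⟩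
  simpa [hy] using hK y

lemma aOpNorm_congr (hA : A.IsPositive) {T T' : E →L[ℂ] E} (h : A ∘L T = A ∘L T') :
    aOpNorm A T = aOpNorm A T' := by
  have h' : ∀ x, aNorm A (T x) = aNorm A (T' x) := fun x => aNorm_congr hA congr($h x)
  simp only [aOpNorm, h']

lemma wA_nonneg (T : E →L[ℂ] E) : 0 ≤ wA A T :=
  Real.sSup_nonneg <| by rintro _ ⟨x, -, rfl⟩; exact norm_nonneg _

lemma wA_congr {T T' : E →L[ℂ] E} (h : A ∘L T = A ∘L T') : wA A T = wA A T' := by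
  have h' : ∀ x, A (T x) = A (T' x) := fun x => congr($h x)
  simp only [wA, h']

lemma IsASelfAdjoint.pow {G : E →L[ℂ] E} (hG : IsASelfAdjoint A G) (n : ℕ) :
    IsASelfAdjoint A (G ^ n) := by
  induction n with
  | zero => exact fun _ _ => rfl
  | succ n ih =>
    intro x y
    calc ⟪A ((G ^ (n + 1)) x), y⟫_ℂ = ⟪A ((G ^ n) (G x)), y⟫_ℂ := by rw [pow_succ]; rfl
      _ = ⟪A x, G ((G ^ n) y)⟫_ℂ := by rw [ih, hG]
      _ = ⟪A x, (G ^ (n + 1)) y⟫_ℂ := by rw [pow_succ']; rfl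

lemma IsASelfAdjoint.four_mul_re_inner_eq (hA : A.IsPositive) {P : E →L[ℂ] E}
    (hP : IsASelfAdjoint A P) (u v : E) :
    4 * (⟪A (P u), v⟫_ℂ).re =
      (⟪A (P (u + v)), u + v⟫_ℂ).re - (⟪A (P (u - v)), u - v⟫_ℂ).re := by
  have hvu : (⟪A (P v), u⟫_ℂ).re = (⟪A (P u), v⟫_ℂ).re := by
    rw [hP, hA.inner_left_eq_inner_right, ← inner_conj_symm, Complex.conj_re]
  simp only [map_add, map_sub, inner_add_left, inner_add_right, inner_sub_left, inner_sub_right,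
    Complex.add_re, Complex.sub_re]
  linarith

end

variable {A : H →L[ℂ] H}

lemma ContinuousLinearMap.IsPositive.exists_eq_adjoint_comp_self (hA : A.IsPositive) :
    ∃ B : H →L[ℂ] H, A = adjoint B ∘L B := by
  obtain ⟨B, hB⟩ := CStarAlgebra.nonneg_iff_eq_star_mul_self.mp ((nonneg_iff_isPositive A).2 hA)
  exact ⟨B, by rw [hB, star_eq_adjoint]; rfl⟩

lemma aNorm_adjoint_comp_self (B : H →L[ℂ] H) (x : H) : aNorm (adjoint B ∘L B) x = ‖B x‖ := by
  rw [aNorm, comp_apply, adjoint_inner_left, inner_self_eq_norm_sq_to_K]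
  norm_cast
  exact Real.sqrt_sq (norm_nonneg _)

lemma aNorm_sub_le (hA : A.IsPositive) (x y : H) : aNorm A (x - y) ≤ aNorm A x + aNorm A y := by
  obtain ⟨B, rfl⟩ := hA.exists_eq_adjoint_comp_self
  simpa only [aNorm_adjoint_comp_self, map_sub] using norm_sub_le _ _

lemma aNorm_smul (hA : A.IsPositive) (c : ℂ) (x : H) : aNorm A (c • x) = ‖c‖ * aNorm A x := by
  obtain ⟨B, rfl⟩ := hA.exists_eq_adjoint_comp_self
  simp only [aNorm_adjoint_comp_self, map_smul, norm_smul]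

lemma aNorm_inv_smul_self (hA : A.IsPositive) {x : H} (hx : 0 < aNorm A x) :
    aNorm A ((aNorm A x : ℂ)⁻¹ • x) = 1 := by
  rw [aNorm_smul hA, norm_inv, Complex.norm_real, Real.norm_of_nonneg hx.le, inv_mul_cancel₀ hx.ne']

lemma norm_inner_le_aNorm_mul_aNorm (hA : A.IsPositive) (x y : H) :
    ‖⟪A x, y⟫_ℂ‖ ≤ aNorm A x * aNorm A y := by
  obtain ⟨B, rfl⟩ := hA.exists_eq_adjoint_comp_self
  simpa only [aNorm_adjoint_comp_self, comp_apply, adjoint_inner_left]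
    using norm_inner_le_norm (B x) (B y)

lemma aNorm_add_sq_add_aNorm_sub_sq (hA : A.IsPositive) (x y : H) :
    aNorm A (x + y) ^ 2 + aNorm A (x - y) ^ 2 = 2 * (aNorm A x ^ 2 + aNorm A y ^ 2) := by
  obtain ⟨B, rfl⟩ := hA.exists_eq_adjoint_comp_self
  simpa only [aNorm_adjoint_comp_self, map_add, map_sub] using parallelogram_law_with_norm ℂ _ _

lemma comp_eq_adjoint_comp_symm (hA : A.IsPositive) {S T : H →L[ℂ] H}
    (h : A ∘L T = adjoint S ∘L A) : A ∘L S = adjoint T ∘L A := by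
  have := congrArg adjoint h
  rwa [adjoint_comp, adjoint_comp, adjoint_adjoint, hA.isSelfAdjoint.adjoint_eq, eq_comm] at this

lemma inner_apply_eq_of_comp_eq {S T : H →L[ℂ] H} (h : A ∘L T = adjoint S ∘L A) (x y : H) :
    ⟪A (T x), y⟫_ℂ = ⟪A x, S y⟫_ℂ := by
  rw [← comp_apply, h, comp_apply, adjoint_inner_left]

namespace IsASelfAdjoint

variable {G : H →L[ℂ] H}

lemma sq_aNorm_apply_le (hA : A.IsPositive) (hG : IsASelfAdjoint A G) (x : H) :
    aNorm A (G x) ^ 2 ≤ aNorm A x * aNorm A (G (G x)) := by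
  rw [sq_aNorm hA, hG]
  exact (Complex.re_le_norm _).trans (norm_inner_le_aNorm_mul_aNorm hA _ _)

lemma aNorm_apply_pow_two_pow_le (hA : A.IsPositive) (hG : IsASelfAdjoint A G) {x : H}
    (hx : aNorm A x = 1) (k : ℕ) : aNorm A (G x) ^ 2 ^ k ≤ aNorm A ((G ^ 2 ^ k) x) := by
  induction k with
  | zero => simp
  | succ k ih =>
    calc aNorm A (G x) ^ 2 ^ (k + 1) = (aNorm A (G x) ^ 2 ^ k) ^ 2 := by rw [pow_succ, pow_mul]
      _ ≤ aNorm A ((G ^ 2 ^ k) x) ^ 2 := by gcongr; exact pow_nonneg (aNorm_nonneg _) _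
      _ ≤ aNorm A x * aNorm A ((G ^ 2 ^ k) ((G ^ 2 ^ k) x)) :=
        (hG.pow _).sq_aNorm_apply_le hA x
      _ = aNorm A ((G ^ 2 ^ (k + 1)) x) := by rw [hx, one_mul, pow_succ', two_mul, pow_add]; rfl

lemma aNorm_apply_le_opNorm_mul (hA : A.IsPositive) (hG : IsASelfAdjoint A G) (x : H) :
    aNorm A (G x) ≤ ‖G‖ * aNorm A x := by
  have unit_bound : ∀ u, aNorm A u = 1 → aNorm A (G u) ≤ ‖G‖ := fun u hu =>
    le_of_forall_pow_two_pow_le (D := √‖A‖ * ‖u‖) (norm_nonneg _) fun k =>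
      calc aNorm A (G u) ^ 2 ^ k ≤ aNorm A ((G ^ 2 ^ k) u) := hG.aNorm_apply_pow_two_pow_le hA hu k
        _ ≤ √‖A‖ * ‖(G ^ 2 ^ k) u‖ := aNorm_le_sqrt_opNorm_mul_norm _
        _ ≤ √‖A‖ * (‖G‖ ^ 2 ^ k * ‖u‖) := by
          gcongr
          exact ((G ^ 2 ^ k).le_opNorm u).trans (by gcongr; exact norm_pow_le' _ (by positivity))
        _ = √‖A‖ * ‖u‖ * ‖G‖ ^ 2 ^ k := by ring
  rcases (aNorm_nonneg (A := A) x).eq_or_lt with hx | hx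
  · have := hG.sq_aNorm_apply_le hA x
    rw [← hx, zero_mul] at this
    rw [← hx, mul_zero, (sq_eq_zero_iff (a := aNorm A (G x))).1 (this.antisymm (sq_nonneg _))]
  · have hu := unit_bound _ (aNorm_inv_smul_self hA hx)
    rw [map_smul, aNorm_smul hA, norm_inv, Complex.norm_real, Real.norm_of_nonneg hx.le,
      inv_mul_le_iff₀ hx] at hu
    linarith

lemma re_inner_le (hA : A.IsPositive) {P : H →L[ℂ] H} {c : ℝ} (hP : IsASelfAdjoint A P)
    (hc : ∀ z, ‖⟪A (P z), z⟫_ℂ‖ ≤ c * aNorm A z ^ 2) (u v : H) :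
    (⟪A (P u), v⟫_ℂ).re ≤ c * (aNorm A u ^ 2 + aNorm A v ^ 2) / 2 := by
  have h₁ := (Complex.re_le_norm _).trans (hc (u + v))
  have h₂ := ((neg_le_abs _).trans (Complex.abs_re_le_norm _)).trans (hc (u - v))
  have := hP.four_mul_re_inner_eq hA u v
  have : c * aNorm A (u + v) ^ 2 + c * aNorm A (u - v) ^ 2 =
      2 * c * (aNorm A u ^ 2 + aNorm A v ^ 2) := by
    rw [← mul_add, aNorm_add_sq_add_aNorm_sub_sq hA]; ring
  linarith

lemma aNorm_apply_le (hA : A.IsPositive) {P : H →L[ℂ] H} {c : ℝ} (hP : IsASelfAdjoint A P)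
    (hc : ∀ z, ‖⟪A (P z), z⟫_ℂ‖ ≤ c * aNorm A z ^ 2) {x : H} (hx : aNorm A x = 1) :
    aNorm A (P x) ≤ c := by
  rcases (aNorm_nonneg (A := A) (P x)).eq_or_lt with hPx | hPx
  · simpa [← hPx, hx] using (norm_nonneg _).trans (hc x)
  · set r := aNorm A (P x)
    have hre : (⟪A (P x), (r : ℂ)⁻¹ • P x⟫_ℂ).re = r := by
      rw [inner_smul_right, ← Complex.ofReal_inv, Complex.re_ofReal_mul, ← sq_aNorm hA, sq,
        inv_mul_cancel_left₀ hPx.ne']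
    have := hP.re_inner_le hA hc x ((r : ℂ)⁻¹ • P x)
    rw [hre, hx, aNorm_inv_smul_self hA hPx] at this
    linarith

end IsASelfAdjoint

lemma aNorm_apply_le_of_comp_eq (hA : A.IsPositive) {S T : H →L[ℂ] H}
    (h : A ∘L T = adjoint S ∘L A) (x : H) : aNorm A (T x) ≤ √‖S ∘L T‖ * aNorm A x := by
  have hS := comp_eq_adjoint_comp_symm hA h
  have hST : IsASelfAdjoint A (S ∘L T) := fun x y => by
    rw [comp_apply, inner_apply_eq_of_comp_eq hS, inner_apply_eq_of_comp_eq h]; rfl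
  have hsq : aNorm A (T x) ^ 2 ≤ (√‖S ∘L T‖ * aNorm A x) ^ 2 :=
    calc aNorm A (T x) ^ 2 = (⟪A x, (S ∘L T) x⟫_ℂ).re := by
          rw [sq_aNorm hA, inner_apply_eq_of_comp_eq h]; rfl
      _ ≤ aNorm A x * aNorm A ((S ∘L T) x) :=
          (Complex.re_le_norm _).trans (norm_inner_le_aNorm_mul_aNorm hA _ _)
      _ ≤ aNorm A x * (‖S ∘L T‖ * aNorm A x) := by
          gcongr
          · exact aNorm_nonneg _
          · exact hST.aNorm_apply_le_opNorm_mul hA x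
      _ = (√‖S ∘L T‖ * aNorm A x) ^ 2 := by
          rw [mul_pow, Real.sq_sqrt (norm_nonneg _)]; ring
  exact le_of_pow_le_pow_left₀ two_ne_zero (mul_nonneg (Real.sqrt_nonneg _) (aNorm_nonneg _)) hsq

namespace ABounded

lemma of_comp_eq (hA : A.IsPositive) {S T : H →L[ℂ] H} (h : A ∘L T = adjoint S ∘L A) :
    ABounded A T :=
  ⟨_, aNorm_apply_le_of_comp_eq hA h⟩

lemma sub (hA : A.IsPositive) {S T : H →L[ℂ] H} (hS : ABounded A S) (hT : ABounded A T) :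
    ABounded A (S - T) := by
  obtain ⟨K, hK⟩ := hS
  obtain ⟨L, hL⟩ := hT
  refine ⟨K + L, fun x => ?_⟩
  rw [sub_apply]
  linarith [aNorm_sub_le hA (S x) (T x), hK x, hL x]

lemma const_smul (hA : A.IsPositive) {T : H →L[ℂ] H} (hT : ABounded A T) (c : ℂ) :
    ABounded A (c • T) := by
  obtain ⟨K, hK⟩ := hT
  refine ⟨‖c‖ * K, fun x => ?_⟩
  rw [smul_apply, aNorm_smul hA, mul_assoc]
  exact mul_le_mul_of_nonneg_left (hK x) (norm_nonneg c)

lemma norm_inner_le_wA_mul_sq (hA : A.IsPositive) {T : H →L[ℂ] H} (hT : ABounded A T)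
    (z : H) : ‖⟪A (T z), z⟫_ℂ‖ ≤ wA A T * aNorm A z ^ 2 := by
  obtain ⟨K, hK⟩ := hT
  have hbdd : BddAbove {r : ℝ | ∃ x : H, aNorm A x = 1 ∧ r = ‖⟪A (T x), x⟫_ℂ‖} := by
    refine ⟨K, ?_⟩
    rintro _ ⟨x, hx, rfl⟩
    simpa [hx] using (norm_inner_le_aNorm_mul_aNorm hA (T x) x).trans
      (mul_le_mul_of_nonneg_right (hK x) (aNorm_nonneg x))
  rcases (aNorm_nonneg (A := A) z).eq_or_lt with hz | hz
  · have := norm_inner_le_aNorm_mul_aNorm hA (T z) z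
    rwa [← hz, mul_zero, ← hz, zero_pow two_ne_zero, mul_zero] at *
  · set r := aNorm A z
    set u := (r : ℂ)⁻¹ • z
    have hzu : z = (r : ℂ) • u := by
      rw [smul_smul, mul_inv_cancel₀ (by exact_mod_cast hz.ne'), one_smul]
    have hscale : ‖⟪A (T z), z⟫_ℂ‖ = r ^ 2 * ‖⟪A (T u), u⟫_ℂ‖ := by
      rw [hzu, map_smul, map_smul, inner_smul_left, inner_smul_right, Complex.conj_ofReal,
        ← mul_assoc, norm_mul, norm_mul, Complex.norm_real, Real.norm_of_nonneg hz.le, sq]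
    rw [hscale, mul_comm]
    exact mul_le_mul_of_nonneg_right (le_csSup hbdd ⟨u, aNorm_inv_smul_self hA hz, rfl⟩)
      (sq_nonneg r)

end ABounded

lemma aOpNorm_half_add_le_wA (hA : A.IsPositive) {S T : H →L[ℂ] H}
    (hT : A ∘L T = adjoint S ∘L A) :
    aOpNorm A T / 2 + (aOpNorm A ((2 : ℂ)⁻¹ • (S + T)) -
      aOpNorm A ((2 * Complex.I)⁻¹ • (S - T))) / 2 ≤ wA A T := by
  have hS := comp_eq_adjoint_comp_symm hA hT
  set P := (2 : ℂ)⁻¹ • (S + T)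
  set Q := (2 * Complex.I)⁻¹ • (S - T)
  have hTbdd : ABounded A T := .of_comp_eq hA hT
  have hQ : ABounded A Q := ((ABounded.of_comp_eq hA hS).sub hA hTbdd).const_smul hA _
  have hP : IsASelfAdjoint A P := fun u v => by
    simp only [P, smul_apply, add_apply, map_smul, map_add, inner_smul_left, inner_smul_right,
      inner_add_left, inner_add_right, inner_apply_eq_of_comp_eq hS, inner_apply_eq_of_comp_eq hT,
      map_inv₀, Complex.conj_ofNat]
    ring
  have hPT : ∀ z, ⟪A (P z), z⟫_ℂ = ((⟪A (T z), z⟫_ℂ).re : ℂ) := fun z => by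
    have hSz : ⟪A (S z), z⟫_ℂ = starRingEnd ℂ ⟪A (T z), z⟫_ℂ := by
      rw [inner_apply_eq_of_comp_eq hS, hA.inner_left_eq_inner_right, inner_conj_symm]
    simp only [P, smul_apply, add_apply, map_smul, map_add, inner_smul_left, inner_add_left, hSz,
      map_inv₀, Complex.conj_ofNat]
    rw [add_comm, Complex.add_conj]
    push_cast
    ring
  have hPw : ∀ z, ‖⟪A (P z), z⟫_ℂ‖ ≤ wA A T * aNorm A z ^ 2 := fun z => by
    rw [hPT, Complex.norm_real, Real.norm_eq_abs]
    exact (Complex.abs_re_le_norm _).trans (hTbdd.norm_inner_le_wA_mul_sq hA z)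
  have hTPQ : T = P - Complex.I • Q := by
    have hI : Complex.I * (2 * Complex.I)⁻¹ = 2⁻¹ := by field_simp
    simp only [P, Q, smul_smul, hI]
    module
  have hPle : aOpNorm A P ≤ wA A T :=
    aOpNorm_le (wA_nonneg T) fun x _ hx => hP.aNorm_apply_le hA hPw hx
  have hTle : aOpNorm A T ≤ wA A T + aOpNorm A Q :=
    aOpNorm_le (add_nonneg (wA_nonneg T) (aOpNorm_nonneg Q)) fun x hx hx1 =>
      calc aNorm A (T x) = aNorm A (P x - Complex.I • Q x) := by rw [hTPQ]; rfl
        _ ≤ aNorm A (P x) + aNorm A (Complex.I • Q x) := aNorm_sub_le hA _ _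
        _ = aNorm A (P x) + aNorm A (Q x) := by rw [aNorm_smul hA, Complex.norm_I, one_mul]
        _ ≤ wA A T + aOpNorm A Q :=
          add_le_add (hP.aNorm_apply_le hA hPw hx1) (hQ.aNorm_apply_le_aOpNorm hx hx1)
  linarith

theorem stmt18_general (A T S R : H →L[ℂ] H) (hA : A.IsPositive)
    (hS : A ∘L S = (ContinuousLinearMap.adjoint T) ∘L A)
    (hR : A ∘L R = (ContinuousLinearMap.adjoint S) ∘L A) :
    aOpNorm A T / 2 +
        (aOpNorm A ((2 : ℂ)⁻¹ • (S + R)) - aOpNorm A ((2 * Complex.I)⁻¹ • (S - R))) / 2 ≤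
      wA A T := by
  have hRT : A ∘L R = A ∘L T := hR.trans (comp_eq_adjoint_comp_symm hA hS).symm
  rw [← wA_congr hRT, ← aOpNorm_congr hA hRT]
  exact aOpNorm_half_add_le_wA hA hR

theorem stmt18 (A T S R : H →L[ℂ] H) (hA : A.IsPositive) (hA' : ∀ x : H, x ≠ 0 → 0 < (⟪A x, x⟫_ℂ).re)
    (hS : A ∘L S = (ContinuousLinearMap.adjoint T) ∘L A)
    (hSr : Set.range (⇑S) ⊆ closure (Set.range (⇑A)))
    (hR : A ∘L R = (ContinuousLinearMap.adjoint S) ∘L A)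
    (hRr : Set.range (⇑R) ⊆ closure (Set.range (⇑A))) :
    aOpNorm A T / 2 +
        (aOpNorm A ((2 : ℂ)⁻¹ • (S + R)) - aOpNorm A ((2 * Complex.I)⁻¹ • (S - R))) / 2 ≤
      wA A T :=
  stmt18_general A T S R hA hS hR
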